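/- arXiv:1903.09106 — 2 statements merged into one kernel-verified Lean document; each statement's English description precedes it below -/
import Mathlib

section
/- If two executions σ₁ and σ₂ have disjoint sets of acting processes (no process takes a step in both), then applying σ₁ followed by σ₂ from a configuration C yields, for every process, the same local state as applying σ₂ followed by σ₁ from C; i.e., RC(C, σ₁·σ₂) and RC(C, σ₂·σ₁) are indistinguishable to all processes. -/
/-- If two executions have disjoint sets of acting processes, then applying
`σ₁` followed by `σ₂` from `C` yields, for every process, the same local state
as applying `σ₂` followed by `σ₁`: the resulting configurations are
indistinguishable to all processes. -/
theorem stmt5 {P S Step : Type*} (actor : Step → P)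
    (apply : List Step → (P → S) → (P → S))
    -- applying a concatenation is applying the parts in order:
    (happend : ∀ σ₁ σ₂ C, apply (σ₁ ++ σ₂) C = apply σ₂ (apply σ₁ C))
    -- an execution only modifies the local states of its acting processes:
    (hframe : ∀ σ C p, (∀ s ∈ σ, actor s ≠ p) → apply σ C p = C p)
    -- the effect on acting processes depends only on the acting processes' states:
    (hdep : ∀ σ (C C' : P → S), (∀ p, (∃ s ∈ σ, actor s = p) → C p = C' p) →
      ∀ p, (∃ s ∈ σ, actor s = p) → apply σ C p = apply σ C' p)
    (σ₁ σ₂ : List Step) (C : P → S)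
    (hdisj : ∀ s₁ ∈ σ₁, ∀ s₂ ∈ σ₂, actor s₁ ≠ actor s₂) :
    ∀ p, apply (σ₁ ++ σ₂) C p = apply (σ₂ ++ σ₁) C p := by
  intro p
  rw [happend, happend]
  by_cases h1 : ∃ s ∈ σ₁, actor s = p
  · -- p acts in σ₁, hence not in σ₂
    have h2 : ∀ s ∈ σ₂, actor s ≠ p := by
      rintro s hs rfl
      obtain ⟨t, ht, hta⟩ := h1
      exact hdisj t ht s hs hta
    rw [hframe σ₂ _ p h2]
    have : apply σ₁ (apply σ₂ C) p = apply σ₁ C p := by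
      refine hdep σ₁ _ _ ?_ p h1
      intro q hq
      refine hframe σ₂ C q ?_
      rintro s hs rfl
      obtain ⟨t, ht, hta⟩ := hq
      exact hdisj t ht s hs hta
    rw [this]
  · by_cases h2 : ∃ s ∈ σ₂, actor s = p
    · have h1' : ∀ s ∈ σ₁, actor s ≠ p := by
        rintro s hs rfl; exact h1 ⟨s, hs, rfl⟩
      rw [hframe σ₁ _ p h1']
      have : apply σ₂ (apply σ₁ C) p = apply σ₂ C p := by
        refine hdep σ₂ _ _ ?_ p h2
        intro q hq
        refine hframe σ₁ C q ?_
        rintro s hs rfl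
        obtain ⟨t, ht, hta⟩ := hq
        exact hdisj s hs t ht hta.symm
      rw [this]
    · have h1' : ∀ s ∈ σ₁, actor s ≠ p := fun s hs h => h1 ⟨s, hs, h⟩
      have h2' : ∀ s ∈ σ₂, actor s ≠ p := fun s hs h => h2 ⟨s, hs, h⟩
      rw [hframe σ₂ _ p h2', hframe σ₁ _ p h1', hframe σ₁ _ p h1', hframe σ₂ _ p h2']
end

section
/- Suppose deletion of all steps of process p from an execution β' yields an execution β that is legal from C whenever (i) no message received by any remaining process in β' was sent by p within β', and (ii) no remaining process's step depends on p's state. Then the resulting configurations RC(C, β') and RC(C, β) assign identical local states to every process other than p. -/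
/-- If each step only modifies the local state of its actor, and steps of
processes other than `p` do not depend on `p`'s state, then deleting all steps
of `p` from an execution `β'` yields a configuration assigning the same local
state as `RC(C, β')` to every process other than `p`. -/
theorem stmt12 {P S Step : Type*} [DecidableEq P] (actor : Step → P)
    (app : Step → (P → S) → (P → S)) (p : P)
    -- a step modifies only its actor's local state:
    (hframe : ∀ s (C : P → S) q, q ≠ actor s → app s C q = C q)
    -- steps of processes other than p do not depend on p's state:
    (hindep : ∀ s, actor s ≠ p → ∀ C C' : P → S,
      (∀ q, q ≠ p → C q = C' q) → ∀ q, q ≠ p → app s C q = app s C' q)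
    (β' : List Step) (C : P → S) :
    ∀ q, q ≠ p →
      (β'.foldl (fun c s => app s c) C) q =
        ((β'.filter (fun s => decide (actor s ≠ p))).foldl
          (fun c s => app s c) C) q := by
  -- auxiliary: folding over a list of non-p steps preserves agreement off p
  have aux : ∀ (l : List Step) (C C' : P → S),
      (∀ s ∈ l, actor s ≠ p) → (∀ q, q ≠ p → C q = C' q) →
      ∀ q, q ≠ p → (l.foldl (fun c s => app s c) C) q =
        (l.foldl (fun c s => app s c) C') q := by
    intro l
    induction l with
    | nil => intro C C' _ h q hq; exact h q hq
    | cons s t ih =>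
      intro C C' hl h q hq
      simp only [List.foldl_cons]
      exact ih _ _ (fun s hs => hl s (List.mem_cons_of_mem _ hs))
        (hindep s (hl s List.mem_cons_self) C C' h) q hq
  induction β' generalizing C with
  | nil => intro q hq; rfl
  | cons s t ih =>
    intro q hq
    by_cases hs : actor s = p
    · have hfilt : (s :: t).filter (fun s => decide (actor s ≠ p)) =
        t.filter (fun s => decide (actor s ≠ p)) := by
        simp [List.filter_cons, hs]
      rw [hfilt, List.foldl_cons]
      rw [ih (app s C) q hq]
      exact aux _ _ _ (fun u hu => of_decide_eq_true (List.mem_filter.mp hu).2)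
        (fun r hr => hframe s C r (hs ▸ hr)) q hq
    · have hfilt : (s :: t).filter (fun s => decide (actor s ≠ p)) =
        s :: t.filter (fun s => decide (actor s ≠ p)) := by
        simp [List.filter_cons, hs]
      rw [hfilt, List.foldl_cons, List.foldl_cons]
      exact ih (app s C) q hq
end
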